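/- Let X ⊆ ℝ^d, ρ ≥ 1, P a Borel probability measure on X with finite ρ-th moment, R a measurable partition of X, C ⊂ X a set of locations, and f : X → Y ⊆ ℝ^q measurable with all relevant pushforwards having finite ρ-th moments. Let θ_d := ( Σ_k ∫_{R_k} ‖x − c_k‖^ρ dP(x) )^{1/ρ}, and for a probability measure T on X and τ ≥ 0 define the relaxed set S_τ(T) := { γ probability measure on X × X : ∫_{X×X} ‖x_1 − x_2‖^ρ dγ(x_1,x_2) ≤ τ^ρ and the second marginal of γ equals T }. Then for any θ ≥ 0, ( sup_{Q ∈ B_θ(P)} W_ρ(f#Q, f#Δ_{R,C}#P) )^ρ ≤ sup_{γ ∈ S_{θ+θ_d}(Δ_{R,C}#P)} ∫_{X×X} ‖f(x_1) − f(x_2)‖^ρ dγ(x_1, x_2). -/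

import Mathlib

open MeasureTheory ENNReal

noncomputable section

/-- `ℝ^d` with the Euclidean norm. -/
abbrev Euc (d : ℕ) : Type := EuclideanSpace ℝ (Fin d)

/-- The set of couplings `Γ(μ, ν)` of two measures: probability measures on the product
whose first marginal is `μ` and second marginal is `ν`. -/
def Couplings {β : Type*} [MeasurableSpace β] (μ ν : Measure β) :
    Set (Measure (β × β)) :=
  {γ | IsProbabilityMeasure γ ∧ γ.map Prod.fst = μ ∧ γ.map Prod.snd = ν}

/-- The ρ-Wasserstein distance
`W_ρ(μ, ν) = (inf_{γ ∈ Γ(μ,ν)} ∫ ‖x - y‖^ρ dγ(x,y))^{1/ρ}`. -/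
noncomputable def Wass {β : Type*} [MeasurableSpace β] [NormedAddCommGroup β]
    (ρ : ℝ) (μ ν : Measure β) : ℝ :=
  ((⨅ γ ∈ Couplings μ ν, ∫⁻ p, ENNReal.ofReal (‖p.1 - p.2‖ ^ ρ) ∂γ).toReal) ^ (1/ρ)

/-- `μ` has finite ρ-th moment: `∫ ‖x‖^ρ dμ(x) < ∞`. -/
def HasFiniteMoment {β : Type*} [MeasurableSpace β] [NormedAddCommGroup β]
    (ρ : ℝ) (μ : Measure β) : Prop :=
  ∫⁻ x, ENNReal.ofReal (‖x‖ ^ ρ) ∂μ < ⊤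

/-- A measurable partition of a set `X` into `N` regions. -/
def IsMeasPartition {β : Type*} [MeasurableSpace β] {N : ℕ}
    (R : Fin N → Set β) (X : Set β) : Prop :=
  (∀ i, MeasurableSet (R i)) ∧ (⋃ i, R i) = X ∧ ∀ i j, i ≠ j → R i ∩ R j = ∅

/-- The quantization operator `Δ_{R,C}(x) = Σ_i c_i 1_{R_i}(x)`. -/
noncomputable def quantMap {β : Type*} [AddCommMonoid β] {N : ℕ}
    (R : Fin N → Set β) (c : Fin N → β) (x : β) : β :=
  ∑ i, (R i).indicator (fun _ => c i) x

/-- The relaxed set `S_τ(T)`: probability measures `γ` on `X × X` whose transport cost is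
at most `τ^ρ` and whose second marginal is `T`. -/
def Srelax {β : Type*} [MeasurableSpace β] [NormedAddCommGroup β]
    (ρ τ : ℝ) (T : Measure β) : Set (Measure (β × β)) :=
  {γ | IsProbabilityMeasure γ ∧
    (∫⁻ p, ENNReal.ofReal (‖p.1 - p.2‖ ^ ρ) ∂γ) ≤ ENNReal.ofReal (τ ^ ρ) ∧
    γ.map Prod.snd = T}

/-! Take a near-optimal coupling `π` of `P` and `Q` and glue it with the quantization map `Δ`:
the law of `(y, Δ x)` under `π(x, y)` couples `Q` with `Δ#P`, and by Minkowski's inequality its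
cost is at most `(W_ρ(P, Q) + θ_d)^ρ`. Its image under `f × f` couples `f#Q` with `f#Δ#P`, so its
`f`-cost bounds `W_ρ(f#Q, f#Δ#P)^ρ`. As the infimum need not be attained, this coupling only
lies in `S_{θ+θ_d}(Δ#P)` after mixing it, with a weight `a < 1`, with the diagonal coupling of
`Δ#P`, which costs nothing; this gives `a · W_ρ(f#Q, f#Δ#P)^ρ ≤ sup` for every `a < 1`.
When `θ + θ_d = 0` mixing is not possible, but then `W_ρ(Q, Δ#P) = 0` forces `Q = Δ#P`: a coupling
of cost `ε` shows `Q F ≤ Δ#P (F_δ) + ε / δ^ρ` for a closed set `F` and its `δ`-thickening. -/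

open Metric Set

section Couplings

variable {α : Type*} [MeasurableSpace α] {μ ν : Measure α}

lemma map_diag_mem_couplings [IsProbabilityMeasure ν] :
    ν.map (fun x => (x, x)) ∈ Couplings ν ν := by
  have hdiag : Measurable fun x : α => (x, x) := by fun_prop
  refine ⟨Measure.isProbabilityMeasure_map hdiag.aemeasurable, ?_, ?_⟩ <;>
    rw [Measure.map_map (by fun_prop) hdiag] <;> exact Measure.map_id

lemma prod_mem_couplings [IsProbabilityMeasure μ] [IsProbabilityMeasure ν] :
    μ.prod ν ∈ Couplings μ ν :=
  ⟨inferInstance, by simp, by simp⟩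

lemma map_swap_mem_couplings {γ : Measure (α × α)} (hγ : γ ∈ Couplings μ ν) :
    γ.map Prod.swap ∈ Couplings ν μ := by
  obtain ⟨_, hfst, hsnd⟩ := hγ
  refine ⟨Measure.isProbabilityMeasure_map measurable_swap.aemeasurable, ?_, ?_⟩
  · rwa [Measure.map_map measurable_fst measurable_swap]
  · rwa [Measure.map_map measurable_snd measurable_swap]

lemma map_prodMap_mem_couplings {β : Type*} [MeasurableSpace β] {f : α → β} (hf : Measurable f)
    {γ : Measure (α × α)} (hγ : γ ∈ Couplings μ ν) :
    γ.map (Prod.map f f) ∈ Couplings (μ.map f) (ν.map f) := by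
  obtain ⟨_, hfst, hsnd⟩ := hγ
  have hff : Measurable (Prod.map f f) := hf.prodMap hf
  refine ⟨Measure.isProbabilityMeasure_map hff.aemeasurable, ?_, ?_⟩
  · rw [Measure.map_map measurable_fst hff, ← hfst, Measure.map_map hf measurable_fst]
    rfl
  · rw [Measure.map_map measurable_snd hff, ← hsnd, Measure.map_map hf measurable_snd]
    rfl

lemma map_glue_mem_couplings {g : α → α} (hg : Measurable g) {π : Measure (α × α)}
    (hπ : π ∈ Couplings μ ν) :
    π.map (fun p => (p.2, g p.1)) ∈ Couplings ν (μ.map g) := by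
  obtain ⟨_, hfst, hsnd⟩ := hπ
  have hglue : Measurable fun p : α × α => (p.2, g p.1) := by fun_prop
  refine ⟨Measure.isProbabilityMeasure_map hglue.aemeasurable, ?_, ?_⟩
  · rwa [Measure.map_map measurable_fst hglue]
  · rw [Measure.map_map measurable_snd hglue, ← hfst, Measure.map_map hg measurable_fst]
    rfl

lemma lintegral_map_diag_eq_zero {g : α × α → ℝ≥0∞} (hg : Measurable g)
    (hg0 : ∀ x, g (x, x) = 0) : ∫⁻ p, g p ∂(ν.map fun x => (x, x)) = 0 := by
  rw [lintegral_map hg (by fun_prop)]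
  simp [hg0]

lemma lintegral_smul_add_smul_map_diag {g : α × α → ℝ≥0∞} (hg : Measurable g)
    (hg0 : ∀ x, g (x, x) = 0) (γ : Measure (α × α)) (a b : ℝ≥0∞) :
    ∫⁻ p, g p ∂(a • γ + b • ν.map fun x => (x, x)) = a * ∫⁻ p, g p ∂γ := by
  rw [lintegral_add_measure, lintegral_smul_measure, lintegral_smul_measure,
    lintegral_map_diag_eq_zero hg hg0, smul_zero, add_zero, smul_eq_mul]

end Couplings

section Transport

variable {E : Type*} [NormedAddCommGroup E] {ρ : ℝ}

lemma eLpNorm_ofReal_eq_lintegral {α : Type*} [MeasurableSpace α] {π : Measure α}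
    (hρ : 0 < ρ) (f : α → E) :
    eLpNorm f (ENNReal.ofReal ρ) π = (∫⁻ x, ENNReal.ofReal (‖f x‖ ^ ρ) ∂π) ^ (1 / ρ) := by
  rw [eLpNorm_eq_lintegral_rpow_enorm_toReal (by simpa using hρ) ofReal_ne_top,
    toReal_ofReal hρ.le]
  simp_rw [← ofReal_norm, ofReal_rpow_of_nonneg (norm_nonneg _) hρ.le]

lemma lintegral_norm_sub_rpow_rpow_le {α : Type*} [MeasurableSpace α] {π : Measure α}
    (hρ : 1 ≤ ρ) {a b c : α → E} (ha : AEStronglyMeasurable a π) (hb : AEStronglyMeasurable b π)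
    (hc : AEStronglyMeasurable c π) :
    (∫⁻ x, ENNReal.ofReal (‖a x - c x‖ ^ ρ) ∂π) ^ (1 / ρ) ≤
      (∫⁻ x, ENNReal.ofReal (‖a x - b x‖ ^ ρ) ∂π) ^ (1 / ρ) +
        (∫⁻ x, ENNReal.ofReal (‖b x - c x‖ ^ ρ) ∂π) ^ (1 / ρ) := by
  have hρ0 : 0 < ρ := by linarith
  have := eLpNorm_add_le (ha.sub hb) (hb.sub hc) (ENNReal.one_le_ofReal.2 hρ)
  simpa only [eLpNorm_ofReal_eq_lintegral hρ0, Pi.add_apply, Pi.sub_apply,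
    sub_add_sub_cancel] using this

variable [MeasurableSpace E]

def transportCost (ρ : ℝ) (γ : Measure (E × E)) : ℝ≥0∞ :=
  ∫⁻ p, ENNReal.ofReal (‖p.1 - p.2‖ ^ ρ) ∂γ

-- `W_ρ(μ, ν)^ρ`, kept in `ℝ≥0∞`: `Wass` passes through `toReal`, which sends `∞` to `0`.
def optimalCost (ρ : ℝ) (μ ν : Measure E) : ℝ≥0∞ :=
  ⨅ γ ∈ Couplings μ ν, transportCost ρ γ

variable {μ ν : Measure E}

lemma optimalCost_le {γ : Measure (E × E)} (hγ : γ ∈ Couplings μ ν) :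
    optimalCost ρ μ ν ≤ transportCost ρ γ :=
  iInf₂_le γ hγ

lemma ofReal_wass_rpow_le (hρ : ρ ≠ 0) (μ ν : Measure E) :
    ENNReal.ofReal (Wass ρ μ ν ^ ρ) ≤ optimalCost ρ μ ν := by
  have : Wass ρ μ ν ^ ρ = (optimalCost ρ μ ν).toReal := by
    rw [Wass, one_div]
    exact Real.rpow_inv_rpow toReal_nonneg hρ
  rw [this]
  exact ofReal_toReal_le

lemma optimalCost_rpow_le_of_wass_le (hρ : 0 ≤ ρ) (hfin : optimalCost ρ μ ν ≠ ⊤) {θ : ℝ}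
    (h : Wass ρ μ ν ≤ θ) : optimalCost ρ μ ν ^ (1 / ρ) ≤ ENNReal.ofReal θ := by
  calc optimalCost ρ μ ν ^ (1 / ρ) = ENNReal.ofReal (Wass ρ μ ν) := by
        rw [← ofReal_toReal hfin, ofReal_rpow_of_nonneg toReal_nonneg (by positivity)]
        rfl
    _ ≤ ENNReal.ofReal θ := ofReal_le_ofReal h

lemma measure_le_measure_thickening_add {γ : Measure (E × E)} (hγ : γ ∈ Couplings μ ν)
    {F : Set E} (hF : MeasurableSet F) (δ : ℝ) :
    μ F ≤ ν (thickening δ F) + γ {p | δ ≤ ‖p.1 - p.2‖} := by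
  obtain ⟨_, hfst, hsnd⟩ := hγ
  have hcover : Prod.fst ⁻¹' F ⊆ Prod.snd ⁻¹' thickening δ F ∪ {p | δ ≤ ‖p.1 - p.2‖} := by
    rintro ⟨x, y⟩ hx
    by_contra! hfar
    simp only [mem_union, mem_preimage, mem_ofPred_eq, not_or, not_le] at hfar
    exact hfar.1 (mem_thickening_iff.2 ⟨x, hx, by rw [dist_eq_norm, norm_sub_rev]; exact hfar.2⟩)
  calc μ F = γ (Prod.fst ⁻¹' F) := by rw [← hfst, Measure.map_apply measurable_fst hF]
    _ ≤ γ (Prod.snd ⁻¹' thickening δ F) + γ {p | δ ≤ ‖p.1 - p.2‖} :=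
      (measure_mono hcover).trans (measure_union_le _ _)
    _ ≤ ν (thickening δ F) + γ {p | δ ≤ ‖p.1 - p.2‖} := by
      rw [← hsnd]
      gcongr
      exact Measure.le_map_apply measurable_snd.aemeasurable _

lemma exists_mem_couplings_mul_le {c a : ℝ≥0∞} (h : optimalCost ρ μ ν ≤ c) (hc0 : c ≠ 0)
    (hctop : c ≠ ⊤) (ha : a < 1) : ∃ γ ∈ Couplings μ ν, a * transportCost ρ γ ≤ c := by
  have hlt : optimalCost ρ μ ν < c / a := by
    refine h.trans_lt ((ENNReal.lt_div_iff_mul_lt (Or.inr hctop) (Or.inl ha.ne_top)).2 ?_)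
    simpa [mul_comm] using ENNReal.mul_lt_mul_left hc0 hctop ha
  obtain ⟨γ, hγ, hcost⟩ : ∃ γ ∈ Couplings μ ν, transportCost ρ γ < c / a := by
    simpa only [optimalCost, iInf_lt_iff, exists_prop] using hlt
  exact ⟨γ, hγ, mul_le_of_le_div' hcost.le⟩

variable [BorelSpace E] [SecondCountableTopology E]

lemma measurable_ofReal_norm_sub_rpow (ρ : ℝ) :
    Measurable fun p : E × E => ENNReal.ofReal (‖p.1 - p.2‖ ^ ρ) := by
  fun_prop

lemma transportCost_map_swap (γ : Measure (E × E)) :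
    transportCost ρ (γ.map Prod.swap) = transportCost ρ γ := by
  rw [transportCost, lintegral_map (measurable_ofReal_norm_sub_rpow ρ) measurable_swap]
  simp_rw [Prod.fst_swap, Prod.snd_swap, norm_sub_rev]
  rfl

lemma optimalCost_comm (μ ν : Measure E) : optimalCost ρ μ ν = optimalCost ρ ν μ := by
  have h : ∀ μ ν : Measure E, optimalCost ρ ν μ ≤ optimalCost ρ μ ν := fun μ ν =>
    le_iInf₂ fun γ hγ =>
      (optimalCost_le (map_swap_mem_couplings hγ)).trans_eq (transportCost_map_swap γ)
  exact le_antisymm (h ν μ) (h μ ν)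

lemma HasFiniteMoment.memLp (hρ : 0 < ρ) (h : HasFiniteMoment ρ μ) :
    MemLp id (ENNReal.ofReal ρ) μ :=
  ⟨aestronglyMeasurable_id, by
    rw [eLpNorm_ofReal_eq_lintegral hρ]
    exact rpow_lt_top_of_nonneg (by positivity) h.ne⟩

lemma optimalCost_lt_top [IsProbabilityMeasure μ] [IsProbabilityMeasure ν] (hρ : 0 < ρ)
    (hμ : HasFiniteMoment ρ μ) (hν : HasFiniteMoment ρ ν) : optimalCost ρ μ ν < ⊤ := by
  refine (optimalCost_le prod_mem_couplings).trans_lt ?_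
  have hfst := (hμ.memLp hρ).comp_measurePreserving (measurePreserving_fst (ν := ν))
  have hsnd := (hν.memLp hρ).comp_measurePreserving (measurePreserving_snd (μ := μ))
  have hfin := (hfst.sub hsnd).eLpNorm_lt_top
  rw [eLpNorm_ofReal_eq_lintegral hρ, rpow_lt_top_iff_of_pos (by positivity)] at hfin
  exact hfin

lemma optimalCost_map_rpow_le (hρ : 1 ≤ ρ) {g : E → E} (hg : Measurable g) (μ ν : Measure E) :
    optimalCost ρ ν (μ.map g) ^ (1 / ρ) ≤
      optimalCost ρ μ ν ^ (1 / ρ) + (∫⁻ x, ENNReal.ofReal (‖x - g x‖ ^ ρ) ∂μ) ^ (1 / ρ) := by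
  have hρinv : 0 < 1 / ρ := by positivity
  set δ := (∫⁻ x, ENNReal.ofReal (‖x - g x‖ ^ ρ) ∂μ) ^ (1 / ρ)
  have hglue : ∀ π ∈ Couplings μ ν,
      optimalCost ρ ν (μ.map g) ^ (1 / ρ) ≤ transportCost ρ π ^ (1 / ρ) + δ := by
    intro π hπ
    have hT : Measurable fun p : E × E => (p.2, g p.1) := by fun_prop
    calc optimalCost ρ ν (μ.map g) ^ (1 / ρ)
        ≤ transportCost ρ (π.map fun p => (p.2, g p.1)) ^ (1 / ρ) :=
          rpow_le_rpow (optimalCost_le (map_glue_mem_couplings hg hπ)) hρinv.le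
      _ = (∫⁻ p, ENNReal.ofReal (‖p.2 - g p.1‖ ^ ρ) ∂π) ^ (1 / ρ) := by
          rw [transportCost, lintegral_map (measurable_ofReal_norm_sub_rpow ρ) hT]
      _ ≤ (∫⁻ p, ENNReal.ofReal (‖p.2 - p.1‖ ^ ρ) ∂π) ^ (1 / ρ) +
            (∫⁻ p, ENNReal.ofReal (‖p.1 - g p.1‖ ^ ρ) ∂π) ^ (1 / ρ) :=
          lintegral_norm_sub_rpow_rpow_le hρ (by fun_prop) (by fun_prop)
            (hg.comp measurable_fst).aestronglyMeasurable
      _ = transportCost ρ π ^ (1 / ρ) + δ := by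
          have hfst : ∫⁻ p, ENNReal.ofReal (‖p.1 - g p.1‖ ^ ρ) ∂π =
              ∫⁻ x, ENNReal.ofReal (‖x - g x‖ ^ ρ) ∂μ := by
            rw [← hπ.2.1, lintegral_map (by fun_prop) measurable_fst]
          simp_rw [norm_sub_rev _ (Prod.fst _), hfst]
          rfl
  calc optimalCost ρ ν (μ.map g) ^ (1 / ρ)
      ≤ ⨅ π ∈ Couplings μ ν, (transportCost ρ π ^ (1 / ρ) + δ) := le_iInf₂ hglue
    _ = optimalCost ρ μ ν ^ (1 / ρ) + δ := by
      have hrpow : ∀ f : Couplings μ ν → ℝ≥0∞, (⨅ π, f π) ^ (1 / ρ) = ⨅ π, f π ^ (1 / ρ) :=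
        (ENNReal.orderIsoRpow (1 / ρ) hρinv).map_iInf
      rw [optimalCost, ← iInf_subtype'', ← iInf_subtype'', hrpow, ENNReal.iInf_add]

lemma ofReal_rpow_mul_measure_le_transportCost (hρ : 0 ≤ ρ) {δ : ℝ} (hδ : 0 ≤ δ)
    (γ : Measure (E × E)) :
    ENNReal.ofReal (δ ^ ρ) * γ {p | δ ≤ ‖p.1 - p.2‖} ≤ transportCost ρ γ := by
  calc ENNReal.ofReal (δ ^ ρ) * γ {p | δ ≤ ‖p.1 - p.2‖}
      ≤ ENNReal.ofReal (δ ^ ρ) *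
          γ {p | ENNReal.ofReal (δ ^ ρ) ≤ ENNReal.ofReal (‖p.1 - p.2‖ ^ ρ)} := by
        gcongr with p
        intro hp
        exact ofReal_le_ofReal (Real.rpow_le_rpow hδ hp hρ)
    _ ≤ transportCost ρ γ :=
      mul_meas_ge_le_lintegral₀ (measurable_ofReal_norm_sub_rpow ρ).aemeasurable _

lemma measure_le_of_optimalCost_eq_zero [IsFiniteMeasure ν] (hρ : 0 < ρ)
    (h : optimalCost ρ μ ν = 0) {F : Set E} (hF : IsClosed F) : μ F ≤ ν F := by
  have hthick : ∀ δ > 0, μ F ≤ ν (thickening δ F) := by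
    intro δ hδ
    have hδρ : ENNReal.ofReal (δ ^ ρ) ≠ 0 := (ofReal_pos.2 (Real.rpow_pos_of_pos hδ ρ)).ne'
    refine ENNReal.le_of_forall_pos_le_add fun η hη _ => ?_
    have hlt : optimalCost ρ μ ν < ENNReal.ofReal (δ ^ ρ) * η := by
      rw [h]
      exact ENNReal.mul_pos hδρ (coe_ne_zero.2 hη.ne')
    obtain ⟨γ, hγ, hcost⟩ :
        ∃ γ ∈ Couplings μ ν, transportCost ρ γ < ENNReal.ofReal (δ ^ ρ) * η := by
      simpa only [optimalCost, iInf_lt_iff, exists_prop] using hlt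
    have hfar : γ {p | δ ≤ ‖p.1 - p.2‖} ≤ η := by
      refine (ENNReal.mul_le_mul_iff_right hδρ ofReal_ne_top).1 ?_
      exact (ofReal_rpow_mul_measure_le_transportCost hρ.le hδ.le γ).trans hcost.le
    exact (measure_le_measure_thickening_add hγ hF.measurableSet δ).trans (by gcongr)
  exact ge_of_tendsto
    (tendsto_measure_thickening_of_isClosed ⟨1, one_pos, measure_ne_top ν _⟩ hF)
    (eventually_nhdsWithin_of_forall hthick)

lemma eq_of_optimalCost_eq_zero [IsProbabilityMeasure μ] [IsProbabilityMeasure ν] (hρ : 0 < ρ)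
    (h : optimalCost ρ μ ν = 0) : μ = ν :=
  ext_of_generate_finite {s | IsClosed s}
    (BorelSpace.measurable_eq.trans borel_eq_generateFrom_isClosed) isPiSystem_isClosed
    (fun _ hF => le_antisymm (measure_le_of_optimalCost_eq_zero hρ h hF)
      (measure_le_of_optimalCost_eq_zero hρ (optimalCost_comm μ ν ▸ h) hF))
    (by simp)

lemma smul_add_smul_map_diag_mem_Srelax [IsProbabilityMeasure ν] (hρ : ρ ≠ 0)
    {γ : Measure (E × E)} (hγ : γ ∈ Couplings μ ν) {a : ℝ≥0∞} (ha : a ≤ 1) {τ : ℝ}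
    (hcost : a * transportCost ρ γ ≤ ENNReal.ofReal (τ ^ ρ)) :
    a • γ + (1 - a) • ν.map (fun x => (x, x)) ∈ Srelax ρ τ ν := by
  obtain ⟨_, -, hsnd⟩ := hγ
  have hdiag : Measurable fun x : E => (x, x) := by fun_prop
  have hsum : a + (1 - a) = 1 := add_tsub_cancel_of_le ha
  refine ⟨⟨?_⟩, ?_, ?_⟩
  · simp [Measure.map_apply hdiag MeasurableSet.univ, hsum]
  · rwa [lintegral_smul_add_smul_map_diag (measurable_ofReal_norm_sub_rpow ρ)
      (by simp [Real.zero_rpow hρ])]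
  · rw [Measure.map_add _ _ measurable_snd, Measure.map_smul, Measure.map_smul, hsnd,
      Measure.map_map measurable_snd hdiag]
    rw [show Prod.snd ∘ (fun x : E => (x, x)) = id from rfl, Measure.map_id, ← add_smul, hsum,
      one_smul]

theorem optimalCost_map_le_iSup_Srelax [IsProbabilityMeasure μ] [IsProbabilityMeasure ν]
    (hρ : 0 < ρ) {τ : ℝ} (h : optimalCost ρ μ ν ≤ ENNReal.ofReal (τ ^ ρ))
    {E' : Type*} [NormedAddCommGroup E'] [MeasurableSpace E'] [BorelSpace E']
    [SecondCountableTopology E'] {f : E → E'} (hf : Measurable f) :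
    optimalCost ρ (μ.map f) (ν.map f) ≤
      ⨆ γ ∈ Srelax ρ τ ν, ∫⁻ p, ENNReal.ofReal (‖f p.1 - f p.2‖ ^ ρ) ∂γ := by
  have hfcost : Measurable fun p : E × E => ENNReal.ofReal (‖f p.1 - f p.2‖ ^ ρ) :=
    (measurable_ofReal_norm_sub_rpow ρ).comp (hf.prodMap hf)
  have hfcost0 : ∀ x : E, ENNReal.ofReal (‖f x - f x‖ ^ ρ) = 0 := by
    simp [Real.zero_rpow hρ.ne']
  have hpush : ∀ γ ∈ Couplings μ ν,
      optimalCost ρ (μ.map f) (ν.map f) ≤ ∫⁻ p, ENNReal.ofReal (‖f p.1 - f p.2‖ ^ ρ) ∂γ :=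
    fun γ hγ => (optimalCost_le (map_prodMap_mem_couplings hf hγ)).trans_eq
      (lintegral_map (measurable_ofReal_norm_sub_rpow ρ) (hf.prodMap hf))
  rcases eq_or_ne (ENNReal.ofReal (τ ^ ρ)) 0 with hτ | hτ
  · obtain rfl := eq_of_optimalCost_eq_zero hρ (le_zero_iff.1 (h.trans hτ.le))
    calc optimalCost ρ (μ.map f) (μ.map f)
        ≤ ∫⁻ p, ENNReal.ofReal (‖f p.1 - f p.2‖ ^ ρ) ∂(μ.map fun x => (x, x)) :=
          hpush _ map_diag_mem_couplings
      _ = 0 := lintegral_map_diag_eq_zero hfcost hfcost0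
      _ ≤ _ := zero_le
  refine ENNReal.le_of_forall_lt_one_mul_le fun a ha => ?_
  obtain ⟨γ, hγ, hcost⟩ := exists_mem_couplings_mul_le h hτ ofReal_ne_top ha
  calc a * optimalCost ρ (μ.map f) (ν.map f)
      ≤ a * ∫⁻ p, ENNReal.ofReal (‖f p.1 - f p.2‖ ^ ρ) ∂γ := by gcongr; exact hpush γ hγ
    _ = ∫⁻ p, ENNReal.ofReal (‖f p.1 - f p.2‖ ^ ρ)
          ∂(a • γ + (1 - a) • ν.map fun x => (x, x)) :=
        (lintegral_smul_add_smul_map_diag hfcost hfcost0 γ a _).symm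
    _ ≤ _ := le_iSup₂_of_le _ (smul_add_smul_map_diag_mem_Srelax hρ.ne' hγ ha.le hcost) le_rfl

end Transport

section Quantization

variable {E : Type*} {N : ℕ} {R : Fin N → Set E}

lemma quantMap_eq_of_mem [AddCommMonoid E] (hR : ∀ i j, i ≠ j → R i ∩ R j = ∅) (c : Fin N → E)
    {k : Fin N} {x : E} (hx : x ∈ R k) : quantMap R c x = c k := by
  rw [quantMap, Finset.sum_eq_single k (fun i _ hik => ?_) (by simp)]
  · exact indicator_of_mem hx _
  · exact indicator_of_notMem (fun hxi => (hR i k hik).subset ⟨hxi, hx⟩) _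

lemma measurable_quantMap [AddCommMonoid E] [MeasurableSpace E] [MeasurableAdd₂ E]
    (hR : ∀ i, MeasurableSet (R i)) (c : Fin N → E) : Measurable (quantMap R c) :=
  Finset.measurable_sum _ fun i _ => measurable_const.indicator (hR i)

lemma lintegral_norm_sub_quantMap_rpow [NormedAddCommGroup E] [MeasurableSpace E] [BorelSpace E]
    [SecondCountableTopology E] {ρ : ℝ} (hρ : 0 < ρ) {P : Measure E} [IsFiniteMeasure P]
    (hP : HasFiniteMoment ρ P) {X : Set E} (hR : IsMeasPartition R X) (hPX : ∀ᵐ x ∂P, x ∈ X)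
    (c : Fin N → E) :
    ∫⁻ x, ENNReal.ofReal (‖x - quantMap R c x‖ ^ ρ) ∂P =
      ENNReal.ofReal (∑ k, ∫ x in R k, ‖x - c k‖ ^ ρ ∂P) := by
  obtain ⟨hRm, hRX, hRd⟩ := hR
  have hdisj : Pairwise (Function.onFun Disjoint R) := fun i j hij =>
    Set.disjoint_iff_inter_eq_empty.2 (hRd i j hij)
  have hint : ∀ k, Integrable (fun x => ‖x - c k‖ ^ ρ) (P.restrict (R k)) := fun k => by
    simpa [toReal_ofReal hρ.le] using
      (((hP.memLp hρ).sub (memLp_const (c k))).integrable_norm_rpow (by simpa using hρ)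
        ofReal_ne_top).restrict
  calc ∫⁻ x, ENNReal.ofReal (‖x - quantMap R c x‖ ^ ρ) ∂P
      = ∫⁻ x in ⋃ k, R k, ENNReal.ofReal (‖x - quantMap R c x‖ ^ ρ) ∂P := by
        rw [hRX, Measure.restrict_eq_self_of_ae_mem hPX]
    _ = ∑ k, ∫⁻ x in R k, ENNReal.ofReal (‖x - c k‖ ^ ρ) ∂P := by
        rw [lintegral_iUnion hRm hdisj, tsum_fintype]
        exact Finset.sum_congr rfl fun k _ => setLIntegral_congr_fun (hRm k) fun x hx => by
          rw [quantMap_eq_of_mem hRd c hx]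
    _ = ENNReal.ofReal (∑ k, ∫ x in R k, ‖x - c k‖ ^ ρ ∂P) := by
        rw [ofReal_sum_of_nonneg fun k _ => setIntegral_nonneg (hRm k) fun x _ => by positivity]
        exact Finset.sum_congr rfl fun k _ =>
          (ofReal_integral_eq_lintegral_ofReal (hint k) (ae_of_all _ fun x => by positivity)).symm

end Quantization

theorem stmt14_general {d q N : ℕ} (ρ : ℝ) (hρ : 1 ≤ ρ) (θ : ℝ) (hθ : 0 ≤ θ)
    (X : Set (Euc d)) (hXm : MeasurableSet X)
    (P : Measure (Euc d)) (hP : IsProbabilityMeasure P) (hPX : P X = 1)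
    (hPm : HasFiniteMoment ρ P)
    (R : Fin N → Set (Euc d)) (hR : IsMeasPartition R X)
    (c : Fin N → Euc d)
    (f : Euc d → Euc q) (hf : Measurable f)
    (θd : ℝ) (hθd : θd = (∑ k, ∫ x in R k, ‖x - c k‖ ^ ρ ∂P) ^ (1/ρ)) :
    ∀ Q : Measure (Euc d), IsProbabilityMeasure Q → Q X = 1 → HasFiniteMoment ρ Q →
      Wass ρ P Q ≤ θ → HasFiniteMoment ρ (Q.map f) →
      ENNReal.ofReal (Wass ρ (Q.map f) ((P.map (quantMap R c)).map f) ^ ρ) ≤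
        ⨆ γ ∈ Srelax ρ (θ + θd) (P.map (quantMap R c)),
          ∫⁻ p, ENNReal.ofReal (‖f p.1 - f p.2‖ ^ ρ) ∂γ := by
  intro Q hQ _ hQm hW _
  have hρ0 : 0 < ρ := by linarith
  have hΔ := measurable_quantMap hR.1 c
  have := Measure.isProbabilityMeasure_map (μ := P) hΔ.aemeasurable
  have hS : 0 ≤ ∑ k, ∫ x in R k, ‖x - c k‖ ^ ρ ∂P :=
    Finset.sum_nonneg fun k _ => setIntegral_nonneg (hR.1 k) fun x _ => by positivity
  have hθd0 : 0 ≤ θd := hθd ▸ Real.rpow_nonneg hS _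
  have hquant : (∫⁻ x, ENNReal.ofReal (‖x - quantMap R c x‖ ^ ρ) ∂P) ^ (1 / ρ) =
      ENNReal.ofReal θd := by
    have hPX' : ∀ᵐ x ∂P, x ∈ X :=
      (ae_mem_iff_measure_eq hXm.nullMeasurableSet).2 (by simp [hPX])
    rw [lintegral_norm_sub_quantMap_rpow hρ0 hPm hR hPX' c,
      ofReal_rpow_of_nonneg hS (by positivity), hθd]
  have hPQ := optimalCost_rpow_le_of_wass_le hρ0.le (optimalCost_lt_top hρ0 hPm hQm).ne hW
  have hK : optimalCost ρ Q (P.map (quantMap R c)) ≤ ENNReal.ofReal ((θ + θd) ^ ρ) := by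
    rw [← ofReal_rpow_of_nonneg (by positivity) hρ0.le, ← rpow_inv_le_iff hρ0, ← one_div]
    calc optimalCost ρ Q (P.map (quantMap R c)) ^ (1 / ρ)
        ≤ optimalCost ρ P Q ^ (1 / ρ) + ENNReal.ofReal θd :=
          hquant ▸ optimalCost_map_rpow_le hρ hΔ P Q
      _ ≤ ENNReal.ofReal (θ + θd) := by rw [ofReal_add hθ hθd0]; gcongr
  exact (ofReal_wass_rpow_le hρ0.ne' _ _).trans (optimalCost_map_le_iSup_Srelax hρ0 hK hf)

/-- worst-case relaxation. For every `Q ∈ B_θ(P)`,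
`(W_ρ(f#Q, f#Δ_{R,C}#P))^ρ ≤ sup_{γ ∈ S_{θ+θ_d}(Δ_{R,C}#P)} ∫ ‖f(x₁) − f(x₂)‖^ρ dγ`. -/
theorem stmt14 {d q N : ℕ} (ρ : ℝ) (hρ : 1 ≤ ρ) (θ : ℝ) (hθ : 0 ≤ θ)
    (X : Set (Euc d)) (hXm : MeasurableSet X) (Y : Set (Euc q))
    (P : Measure (Euc d)) (hP : IsProbabilityMeasure P) (hPX : P X = 1)
    (hPm : HasFiniteMoment ρ P)
    (R : Fin N → Set (Euc d)) (hR : IsMeasPartition R X)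
    (c : Fin N → Euc d) (hc : ∀ k, c k ∈ X)
    (f : Euc d → Euc q) (hf : Measurable f) (hfXY : Set.MapsTo f X Y)
    (hfΔm : HasFiniteMoment ρ ((P.map (quantMap R c)).map f))
    (θd : ℝ) (hθd : θd = (∑ k, ∫ x in R k, ‖x - c k‖ ^ ρ ∂P) ^ (1/ρ)) :
    ∀ Q : Measure (Euc d), IsProbabilityMeasure Q → Q X = 1 → HasFiniteMoment ρ Q →
      Wass ρ P Q ≤ θ → HasFiniteMoment ρ (Q.map f) →
      ENNReal.ofReal (Wass ρ (Q.map f) ((P.map (quantMap R c)).map f) ^ ρ) ≤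
        ⨆ γ ∈ Srelax ρ (θ + θd) (P.map (quantMap R c)),
          ∫⁻ p, ENNReal.ofReal (‖f p.1 - f p.2‖ ^ ρ) ∂γ :=
  stmt14_general ρ hρ θ hθ X hXm P hP hPX hPm R hR c f hf θd hθd
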